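/- arXiv:1809.04827 — 4 statements merged into one kernel-verified Lean document; each statement's English description precedes it below -/
import Mathlib

section
/- Let p be an odd prime, let g be a primitive root modulo p, and let χ be a Dirichlet character modulo p (with complex values) of order p−1 with χ(g) = η, so that η is a primitive (p−1)-th root of unity. For 0 ≤ ℓ ≤ p−2 write χ_ℓ = χ^ℓ and β_ℓ(p−1) = Σ_{1≤i≤p−1, i odd, gcd(i,p−1)>1} η^{iℓ}. Then for every integer x not divisible by p, the sum Σ_{ℓ=0}^{p−2} β_ℓ(p−1)·χ_ℓ(x) equals p−1 if x is a QNRNP modulo p, and equals 0 otherwise. -/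
open Finset

/-- An integer `g` is a primitive root modulo `p`: its residue class generates the
multiplicative group of `ℤ/pℤ`, i.e. every nonzero residue is a power of `g`. -/
def IsPrimitiveRootModP (p : ℕ) (g : ℤ) : Prop :=
  ∀ a : ZMod p, a ≠ 0 → ∃ k : ℕ, (g : ZMod p) ^ k = a

/-- `g` is a quadratic non-residue modulo `p` which is not a primitive root modulo `p`. -/
def IsQNRNP (p : ℕ) (g : ℤ) : Prop :=
  (¬ ∃ x : ℤ, x ^ 2 ≡ g [ZMOD p]) ∧ ¬ IsPrimitiveRootModP p g

/-!
Write `x ≡ g ^ m` with `m < p - 1`. Then `χ ^ ℓ (x) = η ^ (m * ℓ)`, and orthogonality of the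
`(p - 1)`-th roots of unity collapses the double sum to `p - 1` times the indicator of
"`p - 1 - m` is odd and not coprime to `p - 1`". As `p - 1` is even and
`gcd (p - 1 - m, p - 1) = gcd (m, p - 1)`, this says that `m` is odd (by Euler's criterion, `x` is a
non-residue) and not coprime to `p - 1` (`x = g ^ m` is not a primitive root).
-/

theorem IsPrimitiveRoot.sum_range_pow_mul {K : Type*} [Field K] {η : K} {n : ℕ}
    (hη : IsPrimitiveRoot η n) (k : ℕ) :
    ∑ ℓ ∈ range n, η ^ (k * ℓ) = if n ∣ k then (n : K) else 0 := by
  simp_rw [pow_mul]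
  split_ifs with h
  · simp [(hη.pow_eq_one_iff_dvd k).mpr h]
  · rw [geom_sum_eq (mt (hη.pow_eq_one_iff_dvd k).mp h), ← pow_mul, mul_comm, pow_mul,
      hη.pow_eq_one, one_pow, sub_self, zero_div]

theorem Nat.dvd_add_iff_eq_sub {n i m : ℕ} (hi : i ∈ Icc 1 n) (hm : m < n) :
    n ∣ i + m ↔ i = n - m := by
  rw [mem_Icc] at hi
  constructor
  · rintro ⟨c, hc⟩
    obtain _ | _ | c := c <;> [omega; omega; nlinarith]
  · rintro rfl
    exact ⟨1, by omega⟩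

theorem IsPrimitiveRoot.sum_range_sum_pow_mul {K : Type*} [Field K] {η : K} {n : ℕ}
    (hη : IsPrimitiveRoot η n) {S : Finset ℕ} (hS : S ⊆ Icc 1 n) {m : ℕ} (hm : m < n) :
    ∑ ℓ ∈ range n, (∑ i ∈ S, η ^ (i * ℓ)) * η ^ (m * ℓ) = if n - m ∈ S then (n : K) else 0 := by
  calc ∑ ℓ ∈ range n, (∑ i ∈ S, η ^ (i * ℓ)) * η ^ (m * ℓ)
      = ∑ i ∈ S, ∑ ℓ ∈ range n, η ^ ((i + m) * ℓ) := by
        simp_rw [sum_mul, ← pow_add, ← add_mul]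
        exact sum_comm
    _ = ∑ i ∈ S, if i = n - m then (n : K) else 0 := by
        refine sum_congr rfl fun i hi => ?_
        rw [hη.sum_range_pow_mul, if_congr (Nat.dvd_add_iff_eq_sub (hS hi) hm) rfl rfl]
    _ = _ := sum_ite_eq' S (n - m) _

theorem Nat.sub_mem_filter_odd_one_lt_gcd_iff {n m : ℕ}
    [DecidablePred fun i => Odd i ∧ 1 < Nat.gcd i n] (hn : Even n) (hm : m < n) :
    n - m ∈ (Icc 1 n).filter (fun i => Odd i ∧ 1 < Nat.gcd i n) ↔ ¬Even m ∧ ¬m.Coprime n := by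
  have hgcd : 0 < m.gcd n := Nat.gcd_pos_of_pos_right m (by omega)
  rw [mem_filter, mem_Icc, Nat.gcd_self_sub_left hm.le, Nat.coprime_iff_gcd_eq_one,
    Nat.odd_iff, Nat.even_iff]
  rw [Nat.even_iff] at hn
  omega

theorem MulChar.pow_apply_pow {R R' : Type*} [CommMonoid R] [CommMonoidWithZero R']
    (χ : MulChar R R') {a : R} (ha : IsUnit a) (m ℓ : ℕ) : (χ ^ ℓ) (a ^ m) = χ a ^ (m * ℓ) := by
  lift a to Rˣ using ha
  rw [← Units.val_pow_eq_pow_val, MulChar.pow_apply_coe, Units.val_pow_eq_pow_val, map_pow,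
    pow_mul]

theorem exists_sq_intModEq_iff_isSquare (n : ℕ) (x : ℤ) :
    (∃ y : ℤ, y ^ 2 ≡ x [ZMOD n]) ↔ IsSquare (x : ZMod n) := by
  simp_rw [← ZMod.intCast_eq_intCast_iff, Int.cast_pow]
  constructor
  · rintro ⟨y, hy⟩
    exact ⟨y, by rw [← hy, sq]⟩
  · rintro ⟨r, hr⟩
    obtain ⟨y, rfl⟩ := ZMod.intCast_surjective r
    exact ⟨y, by rw [hr, sq]⟩

section PrimeModulus

variable {p : ℕ} [Fact p.Prime]

theorem IsPrimitiveRootModP.intCast_ne_zero (hp2 : p ≠ 2) {g : ℤ}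
    (hg : IsPrimitiveRootModP p g) : (g : ZMod p) ≠ 0 := by
  have : Fact (2 < p) := ⟨lt_of_le_of_ne (Fact.out : p.Prime).two_le (Ne.symm hp2)⟩
  intro h0
  obtain ⟨k, hk⟩ := hg (-1) (neg_ne_zero.mpr one_ne_zero)
  rw [h0] at hk
  obtain _ | k := k
  · exact ZMod.neg_one_ne_one (by rw [← hk, pow_zero])
  · exact neg_ne_zero.mpr one_ne_zero (by rw [← hk, zero_pow k.succ_ne_zero])

theorem isPrimitiveRootModP_iff {g : ℤ} (hg : (g : ZMod p) ≠ 0) :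
    IsPrimitiveRootModP p g ↔ IsPrimitiveRoot (g : ZMod p) (p - 1) := by
  have : NeZero (p - 1) := ⟨(Nat.sub_pos_of_lt (Fact.out : p.Prime).one_lt).ne'⟩
  constructor
  · intro h
    rw [IsPrimitiveRoot.iff_orderOf, ← Units.val_mk0 hg, orderOf_units, ← ZMod.card_units p,
      ← Nat.card_eq_fintype_card]
    refine orderOf_eq_card_of_forall_mem_powers fun v => ?_
    obtain ⟨k, hk⟩ := h v v.ne_zero
    exact ⟨k, Units.ext (by simpa using hk)⟩
  · intro h a ha
    obtain ⟨k, -, hk⟩ := h.eq_pow_of_pow_eq_one (ZMod.pow_card_sub_one_eq_one ha)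
    exact ⟨k, hk⟩

theorem ZMod.isSquare_pow_iff_even (hp2 : p ≠ 2) {g : ZMod p} (hg : IsPrimitiveRoot g (p - 1))
    (m : ℕ) : IsSquare (g ^ m) ↔ Even m := by
  have hp : p - 1 = 2 * (p / 2) := by
    have := Nat.odd_iff.mp ((Fact.out : p.Prime).odd_of_ne_two hp2); omega
  have hhalf : 0 < p / 2 := by have := (Fact.out : p.Prime).two_le; omega
  have hg0 : g ^ m ≠ 0 := pow_ne_zero _ (hg.ne_zero (by omega))
  rw [ZMod.euler_criterion p hg0, ← pow_mul, hg.pow_eq_one_iff_dvd, hp,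
    Nat.mul_dvd_mul_iff_right hhalf, even_iff_two_dvd]

end PrimeModulus

open scoped Classical in
theorem stmt4_general (p : ℕ) [Fact p.Prime] (hp2 : p ≠ 2)
    (g : ℤ) (hg : IsPrimitiveRootModP p g)
    (χ : DirichletCharacter ℂ p)
    (η : ℂ) (hgη : χ (g : ZMod p) = η) (hη : IsPrimitiveRoot η (p - 1))
    (x : ℤ) (hx : ¬ (p : ℤ) ∣ x) :
    ∑ ℓ ∈ Finset.range (p - 1),
        (∑ i ∈ (Finset.Icc 1 (p - 1)).filter (fun i => Odd i ∧ 1 < Nat.gcd i (p - 1)),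
            η ^ (i * ℓ)) * (χ ^ ℓ) (x : ZMod p)
      = if IsQNRNP p x then ((p : ℂ) - 1) else 0 := by
  have hp := (Fact.out : p.Prime)
  have : NeZero (p - 1) := ⟨(Nat.sub_pos_of_lt hp.one_lt).ne'⟩
  have hg0 := hg.intCast_ne_zero hp2
  have hgp := (isPrimitiveRootModP_iff hg0).mp hg
  have hx0 : (x : ZMod p) ≠ 0 := by rwa [Ne, ZMod.intCast_zmod_eq_zero_iff_dvd]
  obtain ⟨m, hm, hgm⟩ := hgp.eq_pow_of_pow_eq_one (ZMod.pow_card_sub_one_eq_one hx0)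
  have hp_even : Even (p - 1) := hp.even_sub_one hp2
  have hQNRNP : IsQNRNP p x ↔
      p - 1 - m ∈ (Icc 1 (p - 1)).filter (fun i => Odd i ∧ 1 < Nat.gcd i (p - 1)) := by
    rw [IsQNRNP, exists_sq_intModEq_iff_isSquare, isPrimitiveRootModP_iff hx0, ← hgm,
      ZMod.isSquare_pow_iff_even hp2 hgp, hgp.pow_iff_coprime (by omega),
      Nat.sub_mem_filter_odd_one_lt_gcd_iff hp_even hm]
  simp_rw [← hgm, χ.pow_apply_pow (isUnit_iff_ne_zero.mpr hg0), hgη]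
  rw [hη.sum_range_sum_pow_mul (filter_subset _ _) hm]
  exact if_congr hQNRNP.symm (by rw [Nat.cast_sub hp.one_le, Nat.cast_one]) rfl

open scoped Classical in
theorem stmt4 (p : ℕ) [Fact p.Prime] (hp2 : p ≠ 2)
    (g : ℤ) (hg : IsPrimitiveRootModP p g)
    (χ : DirichletCharacter ℂ p) (hχ : orderOf χ = p - 1)
    (η : ℂ) (hgη : χ (g : ZMod p) = η) (hη : IsPrimitiveRoot η (p - 1))
    (x : ℤ) (hx : ¬ (p : ℤ) ∣ x) :
    ∑ ℓ ∈ Finset.range (p - 1),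
        (∑ i ∈ (Finset.Icc 1 (p - 1)).filter (fun i => Odd i ∧ 1 < Nat.gcd i (p - 1)),
            η ^ (i * ℓ)) * (χ ^ ℓ) (x : ZMod p)
      = if IsQNRNP p x then ((p : ℂ) - 1) else 0 :=
  stmt4_general p hp2 g hg χ η hgη hη x hx
end

section
/- Let p be an odd prime, let q be a positive divisor of p−1, and let χ be a non-principal Dirichlet character modulo p with complex values. Then |Σ_{1≤m≤p−1, gcd(m,(p−1)/q)=1} χ(m)| ≤ 2^{ω((p−1)/q)} · √p · log p. -/
/-!
Möbius inversion on the condition `gcd(m, d) = 1` writes the sum as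
`∑_{e ∣ d} μ(e) χ(e) ∑_{k ≤ (p-1)/e} χ(k)`. Only the `2^ω(d)` squarefree `e` contribute, and each
inner sum is an incomplete character sum, which the Pólya–Vinogradov inequality bounds by
`√p log p`. For the latter, expanding `χ(k) τ(χ⁻¹) = ∑_b χ⁻¹(b) e(kb/p)` with `|τ(χ⁻¹)| = √p`
turns the incomplete sum into geometric sums, bounded by `1 / sin(π b / p)`, and
`∑_{0<b<p} 1 / sin(π b / p) ≤ p log p` by Jordan's inequality and `H_m ≤ log (2m + 1)`.
-/

open Finset Real

theorem harmonic_le_log_two_mul_add_one (n : ℕ) : (harmonic n : ℝ) ≤ log (2 * n + 1) := by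
  induction n with
  | zero => simp
  | succ n ih =>
    -- `1 / (n + 1)` is the first term of the series of `log ((2n + 3) / (2n + 1))`.
    have hstep : ((n : ℝ) + 1)⁻¹ ≤ log (1 + ((n : ℝ) + 1 / 2)⁻¹) := by
      refine le_of_eq_of_le ?_ (le_hasSum (hasSum_log_one_add_inv (a := (n : ℝ) + 1 / 2)
        (by positivity)) 0 fun j _ => by positivity)
      norm_num
      field_simp
      ring
    have hlog : log (2 * n + 1) + log (1 + ((n : ℝ) + 1 / 2)⁻¹) =
        log (2 * ((n : ℝ) + 1) + 1) := by
      rw [← log_mul (by positivity) (by positivity)]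
      congr 1
      field_simp
      ring
    rw [harmonic_succ]
    push_cast
    linarith

theorem norm_sum_Icc_pow_le {𝕜 : Type*} [NormedDivisionRing 𝕜] {z : 𝕜} (hz : ‖z‖ = 1)
    (h1 : z ≠ 1) (N : ℕ) : ‖∑ k ∈ Icc 1 N, z ^ k‖ ≤ 2 / ‖z - 1‖ := by
  rw [← Ico_add_one_right_eq_Icc, geom_sum_Ico h1 (by omega), norm_div, pow_one]
  gcongr
  calc ‖z ^ (N + 1) - z‖ ≤ ‖z ^ (N + 1)‖ + ‖z‖ := norm_sub_le _ _
    _ = 2 := by rw [norm_pow, hz, one_pow, one_add_one_eq_two]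

theorem norm_sum_Icc_exp_pow_le {θ : ℝ} (hθ : sin (θ / 2) ≠ 0) (N : ℕ) :
    ‖∑ k ∈ Icc 1 N, Complex.exp (Complex.I * θ) ^ k‖ ≤ |sin (θ / 2)|⁻¹ := by
  have hnorm : ‖Complex.exp (Complex.I * θ) - 1‖ = 2 * |sin (θ / 2)| := by
    rw [Complex.norm_exp_I_mul_ofReal_sub_one, norm_mul, Real.norm_two, Real.norm_eq_abs]
  have hne : Complex.exp (Complex.I * θ) ≠ 1 := by
    intro h
    rw [h, sub_self, norm_zero] at hnorm
    exact hθ (abs_eq_zero.mp (by linarith))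
  calc _ ≤ 2 / ‖Complex.exp (Complex.I * θ) - 1‖ :=
        norm_sum_Icc_pow_le (by rw [mul_comm, Complex.norm_exp_ofReal_mul_I]) hne N
    _ = |sin (θ / 2)|⁻¹ := by rw [hnorm]; field_simp

theorem inv_sin_pi_mul_div_le {n v : ℕ} (hv : 0 < v) (hvn : 2 * v ≤ n) :
    (sin (π * v / n))⁻¹ ≤ n / 2 * (v : ℝ)⁻¹ := by
  have hv' : (0 : ℝ) < v := by exact_mod_cast hv
  have hvn' : 2 * (v : ℝ) ≤ n := by exact_mod_cast hvn
  have hn : (0 : ℝ) < n := by linarith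
  have hjordan : 2 / π * (π * v / n) ≤ sin (π * v / n) :=
    mul_le_sin (by positivity) (by rw [div_le_iff₀ hn]; nlinarith [pi_pos])
  calc (sin (π * v / n))⁻¹ ≤ (2 / π * (π * v / n))⁻¹ := inv_anti₀ (by positivity) hjordan
    _ = n / 2 * (v : ℝ)⁻¹ := by field_simp

/-- The term `v = 0` is harmless: it is `(sin 0)⁻¹ = 0⁻¹ = 0`. -/
theorem sum_range_inv_sin_le {n : ℕ} (hn : Odd n) :
    ∑ v ∈ range n, (sin (π * v / n))⁻¹ ≤ n * log n := by
  obtain ⟨m, rfl⟩ := hn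
  set g : ℕ → ℝ := fun v => (sin (π * v / (2 * m + 1 : ℕ)))⁻¹ with hg
  have hreflect : ∑ x ∈ range m, g (m + 1 + x) = ∑ x ∈ range m, g (x + 1) := by
    rw [← sum_range_reflect]
    refine sum_congr rfl fun x hx => ?_
    have hx : x < m := mem_range.mp hx
    simp only [hg]
    rw [show m + 1 + (m - 1 - x) = (2 * m + 1) - (x + 1) by omega, Nat.cast_sub (by omega),
      mul_sub, sub_div, mul_div_cancel_right₀ _ (by positivity), sin_pi_sub]
  have hsplit : ∑ v ∈ range (2 * m + 1), g v = 2 * ∑ x ∈ range m, g (x + 1) := by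
    rw [show 2 * m + 1 = m + 1 + m by ring, sum_range_add, sum_range_succ', hreflect]
    simp only [hg, CharP.cast_eq_zero, mul_zero, zero_div, sin_zero, inv_zero, add_zero]
    ring
  have hhalf : ∑ x ∈ range m, g (x + 1) ≤ (2 * m + 1 : ℕ) / 2 * log (2 * m + 1 : ℕ) :=
    calc ∑ x ∈ range m, g (x + 1)
        ≤ ∑ x ∈ range m, (2 * m + 1 : ℕ) / 2 * ((x + 1 : ℕ) : ℝ)⁻¹ :=
          sum_le_sum fun x hx => inv_sin_pi_mul_div_le (by omega) (by simp at hx; omega)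
      _ = (2 * m + 1 : ℕ) / 2 * (harmonic m : ℝ) := by simp [harmonic, mul_sum]
      _ ≤ (2 * m + 1 : ℕ) / 2 * log (2 * m + 1 : ℕ) := by
          gcongr
          exact_mod_cast harmonic_le_log_two_mul_add_one m
  rw [hsplit]
  linarith

theorem ZMod.sum_val_eq_sum_range {M : Type*} [AddCommMonoid M] (n : ℕ) [NeZero n]
    (f : ℕ → M) : ∑ b : ZMod n, f b.val = ∑ v ∈ range n, f v := by
  obtain ⟨k, rfl⟩ := Nat.exists_eq_succ_of_ne_zero (NeZero.ne n)
  exact Fin.sum_univ_eq_sum_range f (k + 1)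

section GaussSum

variable {F R : Type*} [Field F] [Fintype F] [CommRing R] [IsDomain R]

theorem gaussSum_mulShift_of_ne_one {χ : MulChar F R} (hχ : χ ≠ 1) (ψ : AddChar F R) (a : F) :
    gaussSum χ (ψ.mulShift a) = χ⁻¹ a * gaussSum χ ψ := by
  rcases eq_or_ne a 0 with rfl | ha
  · rw [AddChar.mulShift_zero, gaussSum_one_right hχ, MulChar.map_zero, zero_mul]
  · simpa using gaussSum_mulShift_eq χ ψ (Units.mk0 a ha)

theorem sum_mul_gaussSum_inv {χ : MulChar F R} (hχ : χ ≠ 1) (ψ : AddChar F R)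
    (S : Finset ℕ) : (∑ k ∈ S, χ k) * gaussSum χ⁻¹ ψ = ∑ b, χ⁻¹ b * ∑ k ∈ S, ψ b ^ k := by
  simp_rw [sum_mul, mul_sum]
  rw [sum_comm]
  refine sum_congr rfl fun k _ => ?_
  have h := gaussSum_mulShift_of_ne_one (inv_ne_one.mpr hχ) ψ k
  rw [inv_inv] at h
  rw [← h, gaussSum]
  simp_rw [AddChar.mulShift_apply, ← nsmul_eq_mul, AddChar.map_nsmul_eq_pow]

theorem norm_gaussSum_of_ne_one {χ : MulChar F ℂ} (hχ : χ ≠ 1) {ψ : AddChar F ℂ}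
    (hψ : ψ.IsPrimitive) : ‖gaussSum χ ψ‖ = √(Fintype.card F) := by
  have h := gaussSum_mul_gaussSum_eq_card hχ hψ
  rw [← star_gaussSum_eq, Complex.star_def, Complex.mul_conj'] at h
  rw [← Real.sqrt_sq (norm_nonneg _)]
  congr 1
  exact_mod_cast h

end GaussSum

namespace DirichletCharacter

variable {p : ℕ} [Fact p.Prime]

theorem norm_inv_apply_mul_sum_stdAddChar_pow_le (χ : DirichletCharacter ℂ p) (N : ℕ)
    (b : ZMod p) :
    ‖χ⁻¹ b * ∑ k ∈ Icc 1 N, (ZMod.stdAddChar b : ℂ) ^ k‖ ≤ (sin (π * b.val / p))⁻¹ := by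
  rcases eq_or_ne b 0 with rfl | hb
  · rw [MulChar.map_zero, zero_mul, norm_zero, ZMod.val_zero, Nat.cast_zero, mul_zero, zero_div,
      sin_zero, inv_zero]
  have hb0 : (0 : ℝ) < b.val := by exact_mod_cast ZMod.val_pos.mpr hb
  have hbp : (b.val : ℝ) < p := by exact_mod_cast ZMod.val_lt b
  have hsin : 0 < sin (π * b.val / p) :=
    sin_pos_of_pos_of_lt_pi (div_pos (mul_pos pi_pos hb0) (by linarith))
      (by rw [div_lt_iff₀ (by linarith)]; nlinarith [pi_pos])
  have hψ : (ZMod.stdAddChar b : ℂ) = Complex.exp (Complex.I * (2 * (π * b.val / p) : ℝ)) := by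
    rw [ZMod.stdAddChar_apply, ZMod.toCircle_apply]
    push_cast
    ring_nf
  rw [norm_mul, hψ]
  calc _ ≤ 1 * |sin (2 * (π * b.val / p) / 2)|⁻¹ :=
        mul_le_mul (norm_le_one _ _) (norm_sum_Icc_exp_pow_le (by simpa using hsin.ne') N)
          (norm_nonneg _) zero_le_one
    _ = (sin (π * b.val / p))⁻¹ := by
        rw [one_mul, mul_div_cancel_left₀ _ two_ne_zero, abs_of_pos hsin]

theorem norm_sum_Icc_le_sqrt_mul_log (hp2 : p ≠ 2) {χ : DirichletCharacter ℂ p} (hχ : χ ≠ 1)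
    (N : ℕ) : ‖∑ k ∈ Icc 1 N, χ k‖ ≤ √p * log p := by
  have hp : (0 : ℝ) < p := by exact_mod_cast (Fact.out : p.Prime).pos
  have hτ : ‖gaussSum χ⁻¹ ZMod.stdAddChar‖ = √p := by
    rw [norm_gaussSum_of_ne_one (inv_ne_one.mpr hχ) (ZMod.isPrimitive_stdAddChar p), ZMod.card]
  have hsum : ‖∑ k ∈ Icc 1 N, χ k‖ * √p ≤ √p * log p * √p :=
    calc ‖∑ k ∈ Icc 1 N, χ k‖ * √p
        = ‖∑ b, χ⁻¹ b * ∑ k ∈ Icc 1 N, (ZMod.stdAddChar b : ℂ) ^ k‖ := by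
          rw [← hτ, ← norm_mul, sum_mul_gaussSum_inv hχ]
      _ ≤ ∑ b : ZMod p, (sin (π * b.val / p))⁻¹ := (norm_sum_le _ _).trans
          (sum_le_sum fun b _ => norm_inv_apply_mul_sum_stdAddChar_pow_le χ N b)
      _ = ∑ v ∈ range p, (sin (π * v / p))⁻¹ :=
          ZMod.sum_val_eq_sum_range p fun v => (sin (π * v / p))⁻¹
      _ ≤ p * log p := sum_range_inv_sin_le ((Fact.out : p.Prime).odd_of_ne_two hp2)
      _ = √p * log p * √p := by rw [mul_right_comm, mul_self_sqrt hp.le]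
  exact le_of_mul_le_mul_right hsum (sqrt_pos.mpr hp)

end DirichletCharacter

section Moebius

open ArithmeticFunction
open scoped ArithmeticFunction.Moebius

theorem sum_divisors_moebius (n : ℕ) : ∑ e ∈ n.divisors, μ e = if n = 1 then 1 else 0 := by
  rw [← coe_mul_zeta_apply, moebius_mul_coe_zeta, one_apply]

theorem sum_divisors_filter_dvd_moebius {d : ℕ} (hd : d ≠ 0) (m : ℕ) :
    ∑ e ∈ d.divisors with e ∣ m, μ e = if m.gcd d = 1 then 1 else 0 := by
  rw [← sum_divisors_moebius, ← Nat.divisors_filter_dvd_of_dvd hd (Nat.gcd_dvd_right m d)]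
  refine sum_congr (filter_congr fun e _ => ?_) fun _ _ => rfl
  rw [Nat.dvd_gcd_iff]
  simp_all [Nat.mem_divisors]

theorem sum_Icc_filter_dvd {M : Type*} [AddCommMonoid M] (f : ℕ → M) {e : ℕ} (he : 0 < e)
    (n : ℕ) : ∑ m ∈ Icc 1 n with e ∣ m, f m = ∑ k ∈ Icc 1 (n / e), f (e * k) := by
  refine sum_nbij' (· / e) (e * ·) ?_ ?_ ?_ ?_ ?_
  · simp only [mem_filter, mem_Icc, and_imp]
    rintro m h1 hn ⟨k, rfl⟩
    rw [Nat.mul_div_cancel_left k he]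
    exact ⟨by grind, (Nat.le_div_iff_mul_le he).mpr (by linarith)⟩
  · simp only [mem_filter, mem_Icc, and_imp]
    intro k h1 hk
    exact ⟨⟨Nat.mul_pos he (by omega), by linarith [(Nat.le_div_iff_mul_le he).mp hk]⟩,
      dvd_mul_right e k⟩
  · intro m hm
    exact Nat.mul_div_cancel' (mem_filter.mp hm).2
  · intro k _
    exact Nat.mul_div_cancel_left k he
  · intro m hm
    rw [Nat.mul_div_cancel' (mem_filter.mp hm).2]

theorem sum_Icc_filter_gcd_eq_one {M : Type*} [AddCommGroup M] (f : ℕ → M) {d : ℕ}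
    (hd : d ≠ 0) (n : ℕ) :
    ∑ m ∈ Icc 1 n with m.gcd d = 1, f m =
      ∑ e ∈ d.divisors, μ e • ∑ k ∈ Icc 1 (n / e), f (e * k) :=
  calc ∑ m ∈ Icc 1 n with m.gcd d = 1, f m
      = ∑ m ∈ Icc 1 n, (∑ e ∈ d.divisors with e ∣ m, μ e) • f m := by
        rw [sum_filter]
        refine sum_congr rfl fun m _ => ?_
        rw [sum_divisors_filter_dvd_moebius hd, ite_smul, one_smul, zero_smul]
    _ = ∑ e ∈ d.divisors, μ e • ∑ m ∈ Icc 1 n with e ∣ m, f m := by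
        simp_rw [sum_smul, sum_filter, smul_sum, smul_ite, smul_zero]
        exact sum_comm
    _ = ∑ e ∈ d.divisors, μ e • ∑ k ∈ Icc 1 (n / e), f (e * k) :=
        sum_congr rfl fun e he => by rw [sum_Icc_filter_dvd f (Nat.pos_of_mem_divisors he)]

theorem card_divisors_filter_squarefree {n : ℕ} (hn : n ≠ 0) :
    #{e ∈ n.divisors | Squarefree e} = 2 ^ n.primeFactors.card := by
  rw [card_eq_sum_ones, Nat.sum_divisors_filter_squarefree hn, ← card_eq_sum_ones, card_powerset,
    Nat.factors_eq, List.toFinset_coe, Nat.toFinset_factors]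

theorem norm_sum_Icc_filter_gcd_eq_one_le {E : Type*} [SeminormedAddCommGroup E] (f : ℕ → E)
    {d : ℕ} (hd : d ≠ 0) (n : ℕ) {B : ℝ}
    (hB : ∀ e ∈ d.divisors, ‖∑ k ∈ Icc 1 (n / e), f (e * k)‖ ≤ B) :
    ‖∑ m ∈ Icc 1 n with m.gcd d = 1, f m‖ ≤ 2 ^ d.primeFactors.card * B := by
  rw [sum_Icc_filter_gcd_eq_one f hd]
  calc _ ≤ ∑ e ∈ d.divisors, ‖μ e • ∑ k ∈ Icc 1 (n / e), f (e * k)‖ := norm_sum_le _ _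
    _ ≤ ∑ e ∈ d.divisors, (if Squarefree e then 1 else 0) * B := by
        refine sum_le_sum fun e he => (norm_zsmul_le _ _).trans ?_
        rw [Int.norm_eq_abs, ← Int.cast_abs, abs_moebius]
        split_ifs
        · simpa using hB e he
        · simp
    _ = 2 ^ d.primeFactors.card * B := by
        rw [← sum_mul, sum_boole, card_divisors_filter_squarefree hd, Nat.cast_pow,
          Nat.cast_ofNat]

end Moebius

theorem stmt8 (p q : ℕ) [Fact p.Prime] (hp2 : p ≠ 2) (hq : 0 < q) (hdvd : q ∣ p - 1)
    (χ : DirichletCharacter ℂ p) (hχ : χ ≠ 1) :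
    ‖∑ m ∈ (Finset.Icc 1 (p - 1)).filter (fun m => Nat.gcd m ((p - 1) / q) = 1),
        χ (m : ZMod p)‖
      ≤ 2 ^ ((p - 1) / q).primeFactors.card * Real.sqrt p * Real.log p := by
  have hd : (p - 1) / q ≠ 0 :=
    (Nat.div_pos (Nat.le_of_dvd (by have := (Fact.out : p.Prime).two_le; omega) hdvd) hq).ne'
  rw [mul_assoc]
  refine norm_sum_Icc_filter_gcd_eq_one_le (fun m => χ m) hd (p - 1) fun e _ => ?_
  calc ‖∑ k ∈ Icc 1 ((p - 1) / e), χ ↑(e * k)‖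
      = ‖χ e‖ * ‖∑ k ∈ Icc 1 ((p - 1) / e), χ k‖ := by
        rw [← norm_mul, mul_sum]
        simp_rw [Nat.cast_mul, map_mul]
    _ ≤ 1 * (√p * log p) :=
        mul_le_mul (χ.norm_le_one _) (χ.norm_sum_Icc_le_sqrt_mul_log hp2 hχ _) (norm_nonneg _)
          zero_le_one
    _ = √p * log p := one_mul _
end

section
/- Let p be an odd prime and let η ∈ ℂ be a primitive (p−1)-th root of unity. Then |Σ_{ℓ=1}^{p−2} β_ℓ(p−1)| ≤ 2^{ω(p−1)} · φ(p−1), where β_ℓ(p−1) = Σ_{1≤i≤p−1, i odd, gcd(i,p−1)>1} η^{iℓ}. -/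
open Finset

/-! Swapping the two sums, each odd `i` contributes `∑_{ℓ=1}^{p-2} η^{iℓ} = -1`: since `p - 1`
is even, `η^i ≠ 1` is a `(p-1)`-th root of unity, whose full geometric sum vanishes. So the
double sum is minus the number of admissible `i`, which is at most `p - 1`; and
`n ≤ 2^{ω(n)} φ(n)` because `φ(n) = n ∏_{q ∣ n} (1 - 1/q)` and every factor is at least `1/2`. -/

theorem IsPrimitiveRoot.sum_Icc_pow_mul_eq_neg_one {R : Type*} [CommRing R] [IsDomain R]
    {ζ : R} {n : ℕ} (hζ : IsPrimitiveRoot ζ n) (hn : n ≠ 0) {i : ℕ} (hi : ¬ n ∣ i) :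
    ∑ ℓ ∈ Icc 1 (n - 1), ζ ^ (i * ℓ) = -1 := by
  have hne : ζ ^ i ≠ 1 := fun h => hi ((hζ.pow_eq_one_iff_dvd i).mp h)
  have hgeom : ∑ ℓ ∈ range n, (ζ ^ i) ^ ℓ = 0 := by
    refine eq_zero_of_ne_zero_of_mul_left_eq_zero (sub_ne_zero_of_ne hne.symm) ?_
    rw [mul_neg_geom_sum, ← pow_mul, mul_comm, pow_mul, hζ.pow_eq_one, one_pow, sub_self]
  have hrange : range n = insert 0 (Icc 1 (n - 1)) := by
    ext ℓ; simp only [mem_range, mem_insert, mem_Icc]; omega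
  rw [hrange, sum_insert (by simp), pow_zero] at hgeom
  simp_rw [pow_mul]
  linear_combination hgeom

theorem Nat.le_two_pow_card_primeFactors_mul_totient (n : ℕ) :
    n ≤ 2 ^ #n.primeFactors * n.totient := by
  have hpos : 0 < ∏ q ∈ n.primeFactors, (q - 1) :=
    prod_pos fun q hq => Nat.sub_pos_of_lt (Nat.prime_of_mem_primeFactors hq).one_lt
  have hprod :
      ∏ q ∈ n.primeFactors, q ≤ 2 ^ #n.primeFactors * ∏ q ∈ n.primeFactors, (q - 1) := by
    rw [← prod_const, ← prod_mul_distrib]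
    refine prod_le_prod' fun q hq => ?_
    have := (Nat.prime_of_mem_primeFactors hq).two_le
    omega
  refine Nat.le_of_mul_le_mul_right ?_ hpos
  calc n * ∏ q ∈ n.primeFactors, (q - 1) = n.totient * ∏ q ∈ n.primeFactors, q :=
        (Nat.totient_mul_prod_primeFactors n).symm
    _ ≤ n.totient * (2 ^ #n.primeFactors * ∏ q ∈ n.primeFactors, (q - 1)) :=
        Nat.mul_le_mul_left _ hprod
    _ = 2 ^ #n.primeFactors * n.totient * ∏ q ∈ n.primeFactors, (q - 1) := by ring

theorem stmt9 (p : ℕ) (hp : p.Prime) (hp2 : p ≠ 2)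
    (η : ℂ) (hη : IsPrimitiveRoot η (p - 1)) :
    ‖(∑ ℓ ∈ Finset.Icc 1 (p - 2),
        ∑ i ∈ (Finset.Icc 1 (p - 1)).filter (fun i => Odd i ∧ 1 < Nat.gcd i (p - 1)),
          η ^ (i * ℓ))‖
      ≤ 2 ^ (p - 1).primeFactors.card * ((p - 1).totient : ℝ) := by
  set S := (Icc 1 (p - 1)).filter (fun i => Odd i ∧ 1 < Nat.gcd i (p - 1))
  have hp1 : p - 1 ≠ 0 := (Nat.sub_pos_of_lt hp.one_lt).ne'
  have heven : Even (p - 1) := Nat.Odd.sub_odd (hp.odd_of_ne_two hp2) odd_one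
  have hinner : ∀ i ∈ S, ∑ ℓ ∈ Icc 1 (p - 1 - 1), η ^ (i * ℓ) = -1 := by
    intro i hi
    refine hη.sum_Icc_pow_mul_eq_neg_one hp1 fun hdvd => ?_
    exact Nat.not_even_iff_odd.mpr (mem_filter.mp hi).2.1
      (even_iff_two_dvd.mpr (heven.two_dvd.trans hdvd))
  have hcard : #S ≤ p - 1 := (card_filter_le _ _).trans (by simp)
  rw [show p - 2 = p - 1 - 1 by omega, sum_comm, sum_congr rfl hinner, sum_const, nsmul_eq_mul,
    mul_neg_one, norm_neg, Complex.norm_natCast]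
  exact_mod_cast hcard.trans (Nat.le_two_pow_card_primeFactors_mul_totient (p - 1))
end

section
/- Let p be an odd prime and let x be an integer with 1 ≤ x ≤ p−1, gcd(x, p−1) = 1, such that x is a QNRNP modulo p. Let y be an integer with x·y ≡ 1 (mod p−1), and set g ≡ x^y (mod p). Then g is a QNRNP modulo p and g^x ≡ x (mod p). -/
theorem stmt18 (p : ℕ) (hp : p.Prime) (hp2 : p ≠ 2)
    (x : ℕ) (hx₁ : 1 ≤ x) (hx₂ : x ≤ p - 1) (hgcd : Nat.gcd x (p - 1) = 1)
    (hxq : IsQNRNP p (x : ℤ))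
    (y : ℕ) (hy : x * y ≡ 1 [MOD p - 1])
    (g : ℤ) (hg : g ≡ (x : ℤ) ^ y [ZMOD p]) :
    IsQNRNP p g ∧ g ^ x ≡ (x : ℤ) [ZMOD p] := by
  haveI : Fact p.Prime := ⟨hp⟩
  have hp3 : 3 ≤ p := by
    have := hp.two_le
    omega
  have hxlt : x < p := by omega
  have hu0 : (x : ZMod p) ≠ 0 := by
    intro h
    have hd := (ZMod.natCast_eq_zero_iff x p).mp h
    have := Nat.le_of_dvd (by omega) hd
    omega
  have hG : (g : ZMod p) = (x : ZMod p) ^ y := by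
    have h := (ZMod.intCast_eq_intCast_iff _ _ _).mpr hg
    push_cast at h
    exact h
  -- x * y = 1 + (p-1) * q
  have hmod : x * y % (p - 1) = 1 := by
    have h := hy
    unfold Nat.ModEq at h
    have h1 : 1 % (p - 1) = 1 := Nat.mod_eq_of_lt (by omega)
    omega
  have hxy : x * y = (p - 1) * (x * y / (p - 1)) + 1 := by
    have := Nat.div_add_mod (x * y) (p - 1)
    omega
  have key : (x : ZMod p) ^ (x * y) = (x : ZMod p) := by
    rw [hxy, pow_add, pow_mul, ZMod.pow_card_sub_one_eq_one hu0, one_pow, one_mul, pow_one]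
  have hgx : (g : ZMod p) ^ x = (x : ZMod p) := by
    rw [hG, ← pow_mul, mul_comm y x, key]
  have hgx' : (g : ℤ) ^ x ≡ (x : ℤ) [ZMOD p] := by
    rw [← ZMod.intCast_eq_intCast_iff]
    push_cast
    exact hgx
  refine ⟨⟨?_, ?_⟩, hgx'⟩
  · rintro ⟨s, hs⟩
    apply hxq.1
    refine ⟨s ^ x, ?_⟩
    rw [← ZMod.intCast_eq_intCast_iff] at hs ⊢
    push_cast at hs ⊢
    rw [← pow_mul, mul_comm x 2, pow_mul, hs, hgx]
  · intro hpr
    apply hxq.2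
    intro a ha
    obtain ⟨k, hk⟩ := hpr a ha
    refine ⟨y * k, ?_⟩
    push_cast
    rw [pow_mul, ← hG, hk]
end
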